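/- arXiv:1203.1230 — 3 statements merged into one kernel-verified Lean document; each statement's English description precedes it below -/
import Mathlib

section
/- Let w^R(τ,y) be the unique smooth solution of the Burgers equation w_τ+w w_y=0 with initial data w₀(y)=(w_++w_-)/2+((w_+−w_-)/2)tanh y, where w_-<w_+. Then for every 1≤p≤∞ there is a constant C (depending only on p and w_+−w_-) such that for all τ>0: ‖∂_y w^R(τ,·)‖_{L^p(ℝ)} ≤ C min{(w_+−w_-), (w_+−w_-)^{1/p} τ^{−1+1/p}} and ‖∂_y² w^R(τ,·)‖_{L^p(ℝ)} ≤ C min{(w_+−w_-), τ^{−1}}. -/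
/-! Along characteristics `w(τ, x + w₀(x) τ) = w₀(x)`, and since `w₀` is increasing and bounded
the characteristic map `x ↦ x + w₀(x) τ` is an increasing diffeomorphism of `ℝ`. Differentiating
gives, at the foot `x` of the characteristic, `w_y = w₀'/(1 + w₀' τ)` and
`w_yy = w₀''/(1 + w₀' τ)³`. Hence `0 ≤ w_y ≤ min((w₊ - w₋)/2, 1/τ)`, and `|w_yy| ≤ 2 w_y` because
`w₀'' = -2 tanh · w₀'`. The `L¹` norms are total variations: `w(τ, ·)` is increasing with values
in `[w₋, w₊]`, and `w_y(τ, ·)` increases up to the characteristic from `0` and decreases after it,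
so `‖w_y‖₁ ≤ w₊ - w₋` and `‖w_yy‖₁ ≤ 2 sup w_y`. The `Lᵖ` bounds then follow from the
interpolation inequality `‖f‖_p ≤ ‖f‖₁^{1/p} ‖f‖_∞^{1-1/p}`. -/

open MeasureTheory Filter Set
open scoped ENNReal

noncomputable section

/-- Partial derivative in the first (time) variable. -/
def dT (f : ℝ → ℝ → ℝ) (τ y : ℝ) : ℝ := deriv (fun s => f s y) τ

/-- Partial derivative in the second (space) variable. -/
def dY (f : ℝ → ℝ → ℝ) (τ y : ℝ) : ℝ := deriv (fun z => f τ z) y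

/-- Second space derivative. -/
def dYY (f : ℝ → ℝ → ℝ) (τ y : ℝ) : ℝ := deriv (fun z => dY f τ z) y

/-- Mixed derivative: space derivative of the time derivative. -/
def dYT (f : ℝ → ℝ → ℝ) (τ y : ℝ) : ℝ := deriv (fun z => dT f τ z) y

/-- Smoothed (tanh) initial data for the Burgers equation. -/
def w0 (wm wp y : ℝ) : ℝ := (wp + wm) / 2 + (wp - wm) / 2 * Real.tanh y

/-- `w` is the smooth solution of Burgers' equation `w_τ + w w_y = 0` with tanh-smoothed
Riemann data, characterized through the method of characteristics:
`w(τ,y) = w₀(x₀)` where `y = x₀ + w₀(x₀) τ`. -/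
def IsSmoothedBurgers (wm wp : ℝ) (w : ℝ → ℝ → ℝ) : Prop :=
  ∀ τ ≥ (0:ℝ), ∀ y : ℝ, ∃ x0 : ℝ, y = x0 + w0 wm wp x0 * τ ∧ w τ y = w0 wm wp x0

theorem Real.hasDerivAt_tanh (x : ℝ) : HasDerivAt Real.tanh (1 - Real.tanh x ^ 2) x := by
  have hcosh := (Real.cosh_pos x).ne'
  have hquot : HasDerivAt (fun y => Real.sinh y / Real.cosh y) (1 - Real.tanh x ^ 2) x := by
    refine ((Real.hasDerivAt_sinh x).div (Real.hasDerivAt_cosh x) hcosh).congr_deriv ?_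
    rw [Real.tanh_eq_sinh_div_cosh]
    field_simp
  simpa only [← Real.tanh_eq_sinh_div_cosh] using hquot

theorem Real.tanh_nonneg {x : ℝ} (hx : 0 ≤ x) : 0 ≤ Real.tanh x := by
  rw [Real.tanh_eq_sinh_div_cosh]
  exact div_nonneg (Real.sinh_nonneg_iff.mpr hx) (Real.cosh_pos x).le

theorem Real.tanh_nonpos {x : ℝ} (hx : x ≤ 0) : Real.tanh x ≤ 0 := by
  rw [Real.tanh_eq_sinh_div_cosh]
  exact div_nonpos_of_nonpos_of_nonneg (Real.sinh_nonpos_iff.mpr hx) (Real.cosh_pos x).le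

theorem lintegral_le_of_forall_setLIntegral_Icc_le {f : ℝ → ℝ≥0∞} (hf : AEMeasurable f)
    (c : ℝ) {B : ℝ≥0∞} (hB : ∀ r : ℝ, 0 ≤ r → ∫⁻ x in Icc (c - r) (c + r), f x ≤ B) :
    ∫⁻ x, f x ≤ B := by
  have hcover : AECover volume atTop fun r : ℝ => Icc (c - r) (c + r) :=
    aecover_Icc (tendsto_atBot_add_const_left _ c tendsto_neg_atTop_atBot |>.congr
      fun r => by ring) (tendsto_atTop_add_const_left _ c tendsto_id)
  exact le_of_tendsto (hcover.lintegral_tendsto_of_countably_generated hf)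
    ((eventually_ge_atTop 0).mono hB)

theorem setLIntegral_Icc_abs_deriv_of_nonneg {f : ℝ → ℝ} {a b : ℝ} (hab : a ≤ b)
    (hf : Differentiable ℝ f) (hf' : ∀ x ∈ Icc a b, 0 ≤ deriv f x) :
    ∫⁻ x in Icc a b, ENNReal.ofReal |deriv f x| = ENNReal.ofReal (f b - f a) := by
  have hint : IntegrableOn (deriv f) (Ioc a b) :=
    intervalIntegral.integrableOn_deriv_of_nonneg hf.continuous.continuousOn
      (fun x _ => (hf x).hasDerivAt) fun x hx => hf' x (Ioo_subset_Icc_self hx)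
  calc ∫⁻ x in Icc a b, ENNReal.ofReal |deriv f x|
      = ∫⁻ x in Ioc a b, ENNReal.ofReal (deriv f x) := by
        rw [Measure.restrict_congr_set Ioc_ae_eq_Icc.symm]
        refine setLIntegral_congr_fun measurableSet_Ioc fun x hx => ?_
        rw [abs_of_nonneg (hf' x (Ioc_subset_Icc_self hx))]
    _ = ENNReal.ofReal (∫ x in a..b, deriv f x) := by
        rw [intervalIntegral.integral_of_le hab, ofReal_integral_eq_lintegral_ofReal hint
          ((ae_restrict_iff' measurableSet_Ioc).mpr (ae_of_all _ fun x hx =>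
            hf' x (Ioc_subset_Icc_self hx)))]
    _ = ENNReal.ofReal (f b - f a) := by
        rw [intervalIntegral.integral_eq_sub_of_hasDerivAt_of_le hab
          hf.continuous.continuousOn (fun x _ => (hf x).hasDerivAt)
          ((intervalIntegrable_iff_integrableOn_Ioc_of_le hab).mpr hint)]

theorem setLIntegral_Icc_abs_deriv_of_nonpos {f : ℝ → ℝ} {a b : ℝ} (hab : a ≤ b)
    (hf : Differentiable ℝ f) (hf' : ∀ x ∈ Icc a b, deriv f x ≤ 0) :
    ∫⁻ x in Icc a b, ENNReal.ofReal |deriv f x| = ENNReal.ofReal (f a - f b) := by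
  have hderiv : deriv (-f) = -deriv f := funext fun x => deriv.neg
  have := setLIntegral_Icc_abs_deriv_of_nonneg hab hf.neg fun x hx => by
    simpa [hderiv] using hf' x hx
  rw [hderiv, Pi.neg_apply, Pi.neg_apply, neg_sub_neg] at this
  simpa only [Pi.neg_apply, abs_neg] using this

theorem eLpNorm_one_deriv_le_of_deriv_nonneg {f : ℝ → ℝ} {lo hi : ℝ} (hf : Differentiable ℝ f)
    (hf' : ∀ x, 0 ≤ deriv f x) (hlo : ∀ x, lo ≤ f x) (hhi : ∀ x, f x ≤ hi) :
    eLpNorm (deriv f) 1 volume ≤ ENNReal.ofReal (hi - lo) := by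
  simp only [eLpNorm_one_eq_lintegral_enorm, Real.enorm_eq_ofReal_abs]
  refine lintegral_le_of_forall_setLIntegral_Icc_le
    (measurable_deriv f).abs.ennreal_ofReal.aemeasurable 0 fun r hr => ?_
  rw [setLIntegral_Icc_abs_deriv_of_nonneg (by linarith) hf fun x _ => hf' x]
  exact ENNReal.ofReal_le_ofReal (by linarith [hlo (0 - r), hhi (0 + r)])

theorem eLpNorm_one_deriv_le_of_unimodal {f : ℝ → ℝ} {lo hi : ℝ} (hf : Differentiable ℝ f)
    (c : ℝ) (hleft : ∀ x ≤ c, 0 ≤ deriv f x) (hright : ∀ x, c ≤ x → deriv f x ≤ 0)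
    (hlo : ∀ x, lo ≤ f x) (hhi : ∀ x, f x ≤ hi) :
    eLpNorm (deriv f) 1 volume ≤ ENNReal.ofReal (2 * (hi - lo)) := by
  simp only [eLpNorm_one_eq_lintegral_enorm, Real.enorm_eq_ofReal_abs]
  refine lintegral_le_of_forall_setLIntegral_Icc_le
    (measurable_deriv f).abs.ennreal_ofReal.aemeasurable c fun r hr => ?_
  have hvar : 0 ≤ hi - lo := by linarith [hlo c, hhi c]
  calc ∫⁻ x in Icc (c - r) (c + r), ENNReal.ofReal |deriv f x|
      ≤ (∫⁻ x in Icc (c - r) c, ENNReal.ofReal |deriv f x|) +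
          ∫⁻ x in Icc c (c + r), ENNReal.ofReal |deriv f x| := by
        rw [← Icc_union_Icc_eq_Icc (by linarith : c - r ≤ c) (by linarith : c ≤ c + r)]
        exact lintegral_union_le _ _ _
    _ = ENNReal.ofReal (f c - f (c - r)) + ENNReal.ofReal (f c - f (c + r)) := by
        rw [setLIntegral_Icc_abs_deriv_of_nonneg (by linarith) hf fun x hx => hleft x hx.2,
          setLIntegral_Icc_abs_deriv_of_nonpos (by linarith) hf fun x hx => hright x hx.1]
    _ ≤ ENNReal.ofReal (hi - lo) + ENNReal.ofReal (hi - lo) := by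
        gcongr <;> linarith [hlo (c - r), hlo (c + r), hhi c]
    _ = ENNReal.ofReal (2 * (hi - lo)) := by
        rw [← ENNReal.ofReal_add hvar hvar, two_mul]

theorem eLpNorm_le_eLpNorm_one_rpow_mul_eLpNorm_top_rpow {α E : Type*} [MeasurableSpace α]
    {μ : Measure α} [NormedAddCommGroup E] {f : α → E} (hf : AEStronglyMeasurable f μ)
    {p : ℝ≥0∞} (hp : 1 ≤ p) :
    eLpNorm f p μ ≤ eLpNorm f 1 μ ^ (1 / p).toReal * eLpNorm f ∞ μ ^ (1 - (1 / p).toReal) := by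
  rcases eq_or_ne p ∞ with rfl | hp_top
  · simp
  have hp_pos : 0 < p.toReal := ENNReal.toReal_pos (by positivity) hp_top
  have hp_one : 1 ≤ p.toReal := by simpa using ENNReal.toReal_mono hp_top hp
  have hθ : (1 / p).toReal = 1 / p.toReal := by rw [one_div, one_div, ENNReal.toReal_inv]
  rw [hθ]
  set S := eLpNorm f ∞ μ
  have hpow : ∀ᵐ x ∂μ, ‖f x‖ₑ ^ p.toReal ≤ S ^ (p.toReal - 1) * ‖f x‖ₑ := by
    filter_upwards [ae_le_eLpNormEssSup (f := f)] with x hx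
    calc ‖f x‖ₑ ^ p.toReal = ‖f x‖ₑ ^ (p.toReal - 1 + 1) := by rw [sub_add_cancel]
      _ = ‖f x‖ₑ ^ (p.toReal - 1) * ‖f x‖ₑ := by
          rw [ENNReal.rpow_add_of_nonneg _ _ (by linarith) zero_le_one, ENNReal.rpow_one]
      _ ≤ S ^ (p.toReal - 1) * ‖f x‖ₑ := by
          gcongr
          exact hx.trans_eq eLpNorm_exponent_top.symm
  calc eLpNorm f p μ = (∫⁻ x, ‖f x‖ₑ ^ p.toReal ∂μ) ^ (1 / p.toReal) :=
        eLpNorm_eq_lintegral_rpow_enorm_toReal (by positivity) hp_top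
    _ ≤ (S ^ (p.toReal - 1) * eLpNorm f 1 μ) ^ (1 / p.toReal) := by
        rw [eLpNorm_one_eq_lintegral_enorm, ← lintegral_const_mul'' _ hf.enorm]
        gcongr ?_ ^ _
        exact lintegral_mono_ae hpow
    _ = eLpNorm f 1 μ ^ (1 / p.toReal) * S ^ (1 - 1 / p.toReal) := by
        rw [ENNReal.mul_rpow_of_nonneg _ _ (by positivity), ← ENNReal.rpow_mul, mul_comm]
        congr 2
        field_simp

theorem ENNReal.toReal_one_div_le_one {p : ℝ≥0∞} (hp : 1 ≤ p) : (1 / p).toReal ≤ 1 := by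
  simpa using ENNReal.toReal_mono ENNReal.one_ne_top (ENNReal.inv_le_one.mpr hp)

theorem eLpNorm_le_ofReal_of_eLpNorm_one_le_of_abs_le {α : Type*} [MeasurableSpace α]
    {μ : Measure α} {f : α → ℝ} (hf : AEStronglyMeasurable f μ) {p : ℝ≥0∞} (hp : 1 ≤ p)
    {L M : ℝ} (hL : 0 ≤ L) (hM : 0 ≤ M) (h1 : eLpNorm f 1 μ ≤ ENNReal.ofReal L)
    (hsup : ∀ x, |f x| ≤ M) :
    eLpNorm f p μ ≤ ENNReal.ofReal (L ^ (1 / p).toReal * M ^ (1 - (1 / p).toReal)) := by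
  have hθ₀ : 0 ≤ (1 / p).toReal := ENNReal.toReal_nonneg
  have hθ₁ := ENNReal.toReal_one_div_le_one hp
  have htop : eLpNorm f ∞ μ ≤ ENNReal.ofReal M :=
    eLpNorm_le_of_ae_bound (ae_of_all _ hsup) |>.trans (by simp)
  calc eLpNorm f p μ
      ≤ eLpNorm f 1 μ ^ (1 / p).toReal * eLpNorm f ∞ μ ^ (1 - (1 / p).toReal) :=
        eLpNorm_le_eLpNorm_one_rpow_mul_eLpNorm_top_rpow hf hp
    _ ≤ ENNReal.ofReal L ^ (1 / p).toReal * ENNReal.ofReal M ^ (1 - (1 / p).toReal) := by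
        gcongr
    _ = ENNReal.ofReal (L ^ (1 / p).toReal * M ^ (1 - (1 / p).toReal)) := by
        rw [ENNReal.ofReal_rpow_of_nonneg hL hθ₀, ENNReal.ofReal_rpow_of_nonneg hM (by linarith),
          ← ENNReal.ofReal_mul (by positivity)]

theorem rpow_mul_rpow_one_sub_le_min {Δ m τ θ : ℝ} (hm : 0 ≤ m) (hmΔ : m ≤ Δ) (hτ : 0 < τ)
    (hmτ : m ≤ τ⁻¹) (hθ₁ : θ ≤ 1) :
    Δ ^ θ * m ^ (1 - θ) ≤ min Δ (Δ ^ θ * τ ^ (-1 + θ)) := by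
  have hΔ : 0 ≤ Δ := hm.trans hmΔ
  refine le_min ?_ ?_
  · calc Δ ^ θ * m ^ (1 - θ) ≤ Δ ^ θ * Δ ^ (1 - θ) := by gcongr
      _ = Δ := by rw [← Real.rpow_add' hΔ (by norm_num), add_sub_cancel, Real.rpow_one]
  · gcongr
    calc m ^ (1 - θ) ≤ τ⁻¹ ^ (1 - θ) := by gcongr
      _ = τ ^ (-1 + θ) := by
        rw [Real.inv_rpow hτ.le, ← Real.rpow_neg hτ.le, neg_sub, sub_eq_neg_add]

theorem StrictMono.strictMono_invFun {α β : Type*} [LinearOrder α] [Preorder β] [Nonempty α]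
    {g : α → β} (hg : StrictMono g) (hs : Function.Surjective g) :
    StrictMono (Function.invFun g) := fun x y hxy => by
  rwa [← hg.lt_iff_lt, Function.rightInverse_invFun hs, Function.rightInverse_invFun hs]

theorem StrictMono.continuous_invFun {g : ℝ → ℝ} (hg : StrictMono g)
    (hs : Function.Surjective g) : Continuous (Function.invFun g) :=
  (hg.strictMono_invFun hs).monotone.continuous_of_surjective
    (Function.leftInverse_invFun hg.injective).surjective

theorem StrictMono.hasDerivAt_invFun {g : ℝ → ℝ} (hg : StrictMono g)
    (hs : Function.Surjective g) {g' y : ℝ} (hd : HasDerivAt g g' (Function.invFun g y))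
    (hg' : g' ≠ 0) : HasDerivAt (Function.invFun g) g'⁻¹ y :=
  hd.of_local_left_inverse (hg.continuous_invFun hs).continuousAt hg'
    (Eventually.of_forall (Function.rightInverse_invFun hs))

def charMap (u : ℝ → ℝ) (τ x : ℝ) : ℝ := x + u x * τ

def charInv (u : ℝ → ℝ) (τ : ℝ) : ℝ → ℝ := Function.invFun (charMap u τ)

section Characteristics

variable {u : ℝ → ℝ} {τ : ℝ}

theorem charMap_strictMono (hu : Monotone u) (hτ : 0 ≤ τ) : StrictMono (charMap u τ) :=
  fun _ _ hxy => add_lt_add_of_lt_of_le hxy (mul_le_mul_of_nonneg_right (hu hxy.le) hτ)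

theorem charMap_surjective (hu : Continuous u) {lo hi : ℝ} (hlo : ∀ x, lo ≤ u x)
    (hhi : ∀ x, u x ≤ hi) (hτ : 0 ≤ τ) : Function.Surjective (charMap u τ) := by
  have hcont : Continuous (charMap u τ) := continuous_id.add (hu.mul continuous_const)
  refine hcont.surjective ?_ ?_
  · refine tendsto_atTop_mono (fun x => ?_) (tendsto_atTop_add_const_right _ (lo * τ) tendsto_id)
    exact add_le_add_right (mul_le_mul_of_nonneg_right (hlo x) hτ) x
  · refine tendsto_atBot_mono (fun x => ?_) (tendsto_atBot_add_const_right _ (hi * τ) tendsto_id)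
    exact add_le_add_right (mul_le_mul_of_nonneg_right (hhi x) hτ) x

end Characteristics

def w0Deriv (wm wp x : ℝ) : ℝ := (wp - wm) / 2 * (1 - Real.tanh x ^ 2)

section InitialData

variable {wm wp : ℝ}

theorem hasDerivAt_w0 (x : ℝ) : HasDerivAt (w0 wm wp) (w0Deriv wm wp x) x :=
  ((Real.hasDerivAt_tanh x).const_mul ((wp - wm) / 2)).const_add ((wp + wm) / 2)

theorem hasDerivAt_w0Deriv (x : ℝ) :
    HasDerivAt (w0Deriv wm wp) (-2 * Real.tanh x * w0Deriv wm wp x) x := by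
  refine (((Real.hasDerivAt_tanh x).pow 2).const_sub 1).const_mul ((wp - wm) / 2)
    |>.congr_deriv ?_
  simp only [w0Deriv]
  ring

theorem continuous_w0 : Continuous (w0 wm wp) :=
  continuous_iff_continuousAt.mpr fun x => (hasDerivAt_w0 x).continuousAt

theorem w0Deriv_nonneg (h : wm ≤ wp) (x : ℝ) : 0 ≤ w0Deriv wm wp x :=
  mul_nonneg (by linarith) (by linarith [Real.tanh_sq_lt_one x])

theorem w0Deriv_le (h : wm ≤ wp) (x : ℝ) : w0Deriv wm wp x ≤ (wp - wm) / 2 :=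
  mul_le_of_le_one_right (by linarith) (by linarith [sq_nonneg (Real.tanh x)])

theorem w0_mem_Icc (h : wm ≤ wp) (x : ℝ) : w0 wm wp x ∈ Icc wm wp := by
  have := Real.abs_tanh_lt_one x
  rw [abs_lt] at this
  constructor <;> unfold w0 <;> nlinarith

theorem monotone_w0 (h : wm ≤ wp) : Monotone (w0 wm wp) :=
  monotone_of_deriv_nonneg (fun x => (hasDerivAt_w0 x).differentiableAt) fun x => by
    rw [(hasDerivAt_w0 x).deriv]; exact w0Deriv_nonneg h x

end InitialData

-- `w_y` and `w_yy` at time `τ`, evaluated where the characteristic from `x` arrives.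
def dYLagrangian (wm wp τ x : ℝ) : ℝ := w0Deriv wm wp x / (1 + w0Deriv wm wp x * τ)

def dYYLagrangian (wm wp τ x : ℝ) : ℝ :=
  -2 * Real.tanh x * w0Deriv wm wp x / (1 + w0Deriv wm wp x * τ) ^ 3

section Lagrangian

variable {wm wp τ : ℝ} (h : wm ≤ wp)
include h

theorem one_add_w0Deriv_mul_pos (hτ : 0 ≤ τ) (x : ℝ) : 0 < 1 + w0Deriv wm wp x * τ := by
  have := mul_nonneg (w0Deriv_nonneg h x) hτ
  linarith

theorem hasDerivAt_dYLagrangian (hτ : 0 ≤ τ) (x : ℝ) :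
    HasDerivAt (dYLagrangian wm wp τ)
      (dYYLagrangian wm wp τ x * (1 + w0Deriv wm wp x * τ)) x := by
  have hpos := one_add_w0Deriv_mul_pos h hτ x
  have hD := hasDerivAt_w0Deriv (wm := wm) (wp := wp) x
  refine (hD.div ((hD.mul_const τ).const_add 1) hpos.ne').congr_deriv ?_
  simp only [dYYLagrangian]
  field_simp
  ring

theorem dYLagrangian_nonneg (hτ : 0 ≤ τ) (x : ℝ) : 0 ≤ dYLagrangian wm wp τ x :=
  div_nonneg (w0Deriv_nonneg h x) (one_add_w0Deriv_mul_pos h hτ x).le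

theorem dYLagrangian_le (hτ : 0 < τ) (x : ℝ) :
    dYLagrangian wm wp τ x ≤ min ((wp - wm) / 2) τ⁻¹ := by
  have hD := w0Deriv_nonneg h x
  have hpos := one_add_w0Deriv_mul_pos h hτ.le x
  refine le_min ?_ ?_
  · calc dYLagrangian wm wp τ x ≤ w0Deriv wm wp x :=
          div_le_self hD (by nlinarith)
      _ ≤ (wp - wm) / 2 := w0Deriv_le h x
  · rw [dYLagrangian, div_le_iff₀ hpos, inv_mul_eq_div, le_div_iff₀ hτ]
    nlinarith

theorem abs_dYYLagrangian_le (hτ : 0 ≤ τ) (x : ℝ) :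
    |dYYLagrangian wm wp τ x| ≤ 2 * dYLagrangian wm wp τ x := by
  have hD := w0Deriv_nonneg h x
  have hpos := one_add_w0Deriv_mul_pos h hτ x
  have hone : 1 ≤ 1 + w0Deriv wm wp x * τ := by nlinarith
  have htanh := (Real.abs_tanh_lt_one x).le
  rw [dYYLagrangian, dYLagrangian, abs_div, abs_mul, abs_mul, abs_of_nonneg hD,
    abs_of_pos (pow_pos hpos 3), abs_neg, abs_two, div_le_iff₀ (pow_pos hpos 3)]
  calc 2 * |Real.tanh x| * w0Deriv wm wp x ≤ 2 * w0Deriv wm wp x := by nlinarith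
    _ ≤ 2 * w0Deriv wm wp x * (1 + w0Deriv wm wp x * τ) ^ 2 := by
        nlinarith [one_le_pow₀ (n := 2) hone]
    _ = _ := by field_simp

theorem dYYLagrangian_nonneg_of_nonpos (hτ : 0 ≤ τ) {x : ℝ} (hx : x ≤ 0) :
    0 ≤ dYYLagrangian wm wp τ x :=
  div_nonneg (mul_nonneg (by linarith [Real.tanh_nonpos hx]) (w0Deriv_nonneg h x))
    (pow_pos (one_add_w0Deriv_mul_pos h hτ x) 3).le

theorem dYYLagrangian_nonpos_of_nonneg (hτ : 0 ≤ τ) {x : ℝ} (hx : 0 ≤ x) :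
    dYYLagrangian wm wp τ x ≤ 0 :=
  div_nonpos_of_nonpos_of_nonneg
    (mul_nonpos_of_nonpos_of_nonneg (by linarith [Real.tanh_nonneg hx]) (w0Deriv_nonneg h x))
    (pow_pos (one_add_w0Deriv_mul_pos h hτ x) 3).le

end Lagrangian

section CharacteristicsOfW0

variable {wm wp τ : ℝ} (h : wm ≤ wp) (hτ : 0 ≤ τ)
include h hτ

theorem charMap_w0_strictMono : StrictMono (charMap (w0 wm wp) τ) :=
  charMap_strictMono (monotone_w0 h) hτ

theorem charMap_w0_surjective : Function.Surjective (charMap (w0 wm wp) τ) :=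
  charMap_surjective continuous_w0 (fun x => (w0_mem_Icc h x).1) (fun x => (w0_mem_Icc h x).2) hτ

theorem charInv_w0_charMap (x : ℝ) : charInv (w0 wm wp) τ (charMap (w0 wm wp) τ x) = x :=
  Function.leftInverse_invFun (charMap_w0_strictMono h hτ).injective x

theorem monotone_charInv_w0 : Monotone (charInv (w0 wm wp) τ) :=
  ((charMap_w0_strictMono h hτ).strictMono_invFun (charMap_w0_surjective h hτ)).monotone

theorem hasDerivAt_charInv_w0 (y : ℝ) :
    HasDerivAt (charInv (w0 wm wp) τ) (1 + w0Deriv wm wp (charInv (w0 wm wp) τ y) * τ)⁻¹ y :=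
  (charMap_w0_strictMono h hτ).hasDerivAt_invFun (charMap_w0_surjective h hτ)
    ((hasDerivAt_id _).add ((hasDerivAt_w0 _).mul_const τ))
    (one_add_w0Deriv_mul_pos h hτ _).ne'

end CharacteristicsOfW0

namespace IsSmoothedBurgers

variable {wm wp τ : ℝ} {w : ℝ → ℝ → ℝ} (hw : IsSmoothedBurgers wm wp w) (h : wm ≤ wp)
include hw h

theorem eq_w0_charInv (hτ : 0 ≤ τ) (y : ℝ) : w τ y = w0 wm wp (charInv (w0 wm wp) τ y) := by
  obtain ⟨x₀, hy, hwy⟩ := hw τ hτ y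
  rw [hwy, hy]
  exact congrArg (w0 wm wp) (charInv_w0_charMap h hτ x₀).symm

theorem hasDerivAt_space (hτ : 0 ≤ τ) (y : ℝ) :
    HasDerivAt (w τ) (dYLagrangian wm wp τ (charInv (w0 wm wp) τ y)) y := by
  rw [show w τ = w0 wm wp ∘ charInv (w0 wm wp) τ from funext (hw.eq_w0_charInv h hτ)]
  exact (hasDerivAt_w0 _).comp y (hasDerivAt_charInv_w0 h hτ y)

theorem dY_eq (hτ : 0 ≤ τ) : dY w τ = dYLagrangian wm wp τ ∘ charInv (w0 wm wp) τ :=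
  funext fun y => (hw.hasDerivAt_space h hτ y).deriv

theorem hasDerivAt_dY (hτ : 0 ≤ τ) (y : ℝ) :
    HasDerivAt (dY w τ) (dYYLagrangian wm wp τ (charInv (w0 wm wp) τ y)) y := by
  rw [hw.dY_eq h hτ]
  refine ((hasDerivAt_dYLagrangian h hτ _).comp y (hasDerivAt_charInv_w0 h hτ y)).congr_deriv ?_
  exact mul_inv_cancel_right₀ (one_add_w0Deriv_mul_pos h hτ _).ne' _

theorem dYY_eq (hτ : 0 ≤ τ) : dYY w τ = dYYLagrangian wm wp τ ∘ charInv (w0 wm wp) τ :=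
  funext fun y => (hw.hasDerivAt_dY h hτ y).deriv

theorem abs_dY_le (hτ : 0 < τ) (y : ℝ) : |dY w τ y| ≤ min ((wp - wm) / 2) τ⁻¹ := by
  rw [hw.dY_eq h hτ.le, Function.comp_apply, abs_of_nonneg (dYLagrangian_nonneg h hτ.le _)]
  exact dYLagrangian_le h hτ _

theorem abs_dYY_le (hτ : 0 < τ) (y : ℝ) : |dYY w τ y| ≤ 2 * min ((wp - wm) / 2) τ⁻¹ := by
  rw [hw.dYY_eq h hτ.le]
  exact (abs_dYYLagrangian_le h hτ.le _).trans (by gcongr; exact dYLagrangian_le h hτ _)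

theorem eLpNorm_one_dY_le (hτ : 0 ≤ τ) :
    eLpNorm (dY w τ) 1 volume ≤ ENNReal.ofReal (wp - wm) :=
  eLpNorm_one_deriv_le_of_deriv_nonneg (f := w τ)
    (fun y => (hw.hasDerivAt_space h hτ y).differentiableAt)
    (fun y => by rw [(hw.hasDerivAt_space h hτ y).deriv]; exact dYLagrangian_nonneg h hτ _)
    (fun y => by rw [hw.eq_w0_charInv h hτ]; exact (w0_mem_Icc h _).1)
    (fun y => by rw [hw.eq_w0_charInv h hτ]; exact (w0_mem_Icc h _).2)

theorem eLpNorm_one_dYY_le (hτ : 0 < τ) :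
    eLpNorm (dYY w τ) 1 volume ≤ ENNReal.ofReal (2 * min ((wp - wm) / 2) τ⁻¹) := by
  have hX0 := charInv_w0_charMap h hτ.le 0
  have hbound := eLpNorm_one_deriv_le_of_unimodal (f := dY w τ) (lo := 0)
    (fun y => (hw.hasDerivAt_dY h hτ.le y).differentiableAt) (charMap (w0 wm wp) τ 0)
    (fun y hy => by
      rw [(hw.hasDerivAt_dY h hτ.le y).deriv]
      exact dYYLagrangian_nonneg_of_nonpos h hτ.le (hX0 ▸ monotone_charInv_w0 h hτ.le hy))
    (fun y hy => by
      rw [(hw.hasDerivAt_dY h hτ.le y).deriv]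
      exact dYYLagrangian_nonpos_of_nonneg h hτ.le (hX0 ▸ monotone_charInv_w0 h hτ.le hy))
    (fun y => by rw [hw.dY_eq h hτ.le]; exact dYLagrangian_nonneg h hτ.le _)
    (fun y => (le_abs_self _).trans (hw.abs_dY_le h hτ y))
  rwa [sub_zero] at hbound

end IsSmoothedBurgers

/-- `L^p` decay estimates for the first and second space derivatives of the smoothed
Burgers solution. -/
theorem burgers_lp_estimates (wm wp : ℝ) (h : wm < wp) (w : ℝ → ℝ → ℝ)
    (hw : IsSmoothedBurgers wm wp w) (p : ℝ≥0∞) (hp : 1 ≤ p) :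
    ∃ C > (0:ℝ), ∀ τ > (0:ℝ),
      eLpNorm (fun y => dY w τ y) p volume ≤
        ENNReal.ofReal
          (C * min (wp - wm) ((wp - wm) ^ (1 / p).toReal * τ ^ (-1 + (1 / p).toReal))) ∧
      eLpNorm (fun y => dYY w τ y) p volume ≤ ENNReal.ofReal (C * min (wp - wm) τ⁻¹) := by
  refine ⟨2, two_pos, fun τ hτ => ?_⟩
  set m := min ((wp - wm) / 2) τ⁻¹
  have hm : 0 ≤ m := le_min (by linarith) (inv_nonneg.mpr hτ.le)
  have hmΔ : m ≤ wp - wm := (min_le_left _ _).trans (by linarith)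
  set θ := (1 / p).toReal
  have hθ₁ : θ ≤ 1 := ENNReal.toReal_one_div_le_one hp
  constructor
  · refine (eLpNorm_le_ofReal_of_eLpNorm_one_le_of_abs_le
      (measurable_deriv _).aestronglyMeasurable hp (by linarith) hm
      (hw.eLpNorm_one_dY_le h.le hτ.le) (hw.abs_dY_le h.le hτ)).trans
      (ENNReal.ofReal_le_ofReal ?_)
    have := rpow_mul_rpow_one_sub_le_min hm hmΔ hτ (min_le_right _ _) hθ₁
    linarith [(by positivity : 0 ≤ (wp - wm) ^ θ * m ^ (1 - θ))]
  · refine (eLpNorm_le_ofReal_of_eLpNorm_one_le_of_abs_le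
      (measurable_deriv _).aestronglyMeasurable hp (by positivity) (by positivity)
      (hw.eLpNorm_one_dYY_le h.le hτ) (hw.abs_dYY_le h.le hτ)).trans
      (ENNReal.ofReal_le_ofReal ?_)
    rw [← Real.rpow_add' (by positivity) (by norm_num), add_sub_cancel, Real.rpow_one]
    exact mul_le_mul_of_nonneg_left (min_le_min (by linarith) le_rfl) two_pos.le
end
end

section
/- Let w^R(τ,y) be the unique smooth solution of the Burgers equation w_τ+w w_y=0 with initial data w₀(y)=(w_++w_-)/2+((w_+−w_-)/2)tanh y, where w_-<w_+. Then: if y−w_-τ<0, one has |w^R(τ,y)−w_-| ≤ (w_+−w_-)e^{−2|y−w_-τ|} and |∂_y w^R(τ,y)| ≤ 2(w_+−w_-)e^{−2|y−w_-τ|}; and if y−w_+τ>0, one has |w^R(τ,y)−w_+| ≤ (w_+−w_-)e^{−2|y−w_+τ|} and |∂_y w^R(τ,y)| ≤ 2(w_+−w_-)e^{−2|y−w_+τ|}. -/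
/-!
The solution is constant along the characteristics `x ↦ x + w₀(x) τ`. Since `w₀` is
increasing, this map is an increasing bijection of `ℝ`, and differentiating its inverse gives
`∂_y w(τ, y) = w₀'(x) / (1 + τ w₀'(x)) ≤ w₀'(x)` at the foot `x` of the characteristic through `y`.
As `w₋ ≤ w₀ ≤ w₊`, that foot satisfies `y - w₊ τ ≤ x ≤ y - w₋ τ`, so outside the fan it lies on
the same side as `y - w±τ` and further out. There `w₀ - w±` and `w₀' = (w₊ - w₋) / (2 cosh² x)`
are bounded by multiples of `e^{-2|x|}`, the tail decay of `tanh`.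
-/

open MeasureTheory Filter Set
open scoped ENNReal

noncomputable section

open Real Function

namespace Real

theorem hasDerivAt_tanh_s3 (x : ℝ) : HasDerivAt tanh (1 / cosh x ^ 2) x := by
  have hcosh : cosh x ≠ 0 := (cosh_pos x).ne'
  have h := (hasDerivAt_sinh x).div (hasDerivAt_cosh x) hcosh
  rw [show sinh / cosh = tanh from funext fun y => (tanh_eq_sinh_div_cosh y).symm] at h
  refine h.congr_deriv ?_
  rw [← cosh_sq_sub_sinh_sq x]
  ring

theorem one_add_tanh_le (x : ℝ) : 1 + tanh x ≤ 2 * exp (2 * x) := by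
  have h2x : exp (2 * x) = exp x / exp (-x) := by rw [← exp_sub]; ring_nf
  have h1 : 1 + tanh x = 2 * exp x / (exp x + exp (-x)) := by
    have : 0 < exp x + exp (-x) := by positivity
    rw [tanh_eq]; field_simp; ring
  rw [h1, h2x, mul_div_assoc]
  gcongr
  linarith [exp_pos x]

theorem one_sub_tanh_le (x : ℝ) : 1 - tanh x ≤ 2 * exp (-(2 * x)) := by
  simpa [sub_eq_add_neg, tanh_neg] using one_add_tanh_le (-x)

theorem one_div_cosh_sq_le (x : ℝ) : 1 / cosh x ^ 2 ≤ 4 * exp (-(2 * |x|)) := by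
  have hcosh : exp |x| / 2 ≤ cosh x := by
    rw [← cosh_abs, cosh_eq]
    linarith [exp_pos (-|x|)]
  calc 1 / cosh x ^ 2 ≤ 1 / (exp |x| / 2) ^ 2 := by gcongr
    _ = 4 * exp (-(2 * |x|)) := by
      rw [div_pow, exp_neg, ← exp_nat_mul]
      field_simp
      ring_nf

end Real

theorem abs_div_one_add_mul_le {d τ : ℝ} (hd : 0 ≤ d) (hτ : 0 ≤ τ) : |d / (1 + d * τ)| ≤ d := by
  have hden : 1 ≤ 1 + d * τ := le_add_of_nonneg_right (mul_nonneg hd hτ)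
  rw [abs_of_nonneg (div_nonneg hd (by linarith))]
  exact div_le_self hd hden

section Characteristics

variable {f : ℝ → ℝ} {τ : ℝ}

theorem surjective_add_mul_of_monotone (hf : Monotone f) (hcont : Continuous f) (hτ : 0 ≤ τ) :
    Surjective fun x => x + f x * τ := by
  refine Continuous.surjective (by fun_prop) ?_ ?_
  · refine tendsto_atTop_mono' _ ?_ (tendsto_atTop_add_const_right _ (f 0 * τ) tendsto_id)
    filter_upwards [eventually_ge_atTop 0] with x hx
    simp only [id]
    nlinarith [hf hx]
  · refine tendsto_atBot_mono' _ ?_ (tendsto_atBot_add_const_right _ (f 0 * τ) tendsto_id)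
    filter_upwards [eventually_le_atBot 0] with x hx
    simp only [id]
    nlinarith [hf hx]

theorem hasDerivAt_of_characteristics {f' u : ℝ → ℝ} (hf : ∀ x, HasDerivAt f (f' x) x)
    (hf' : ∀ x, 0 ≤ f' x) (hτ : 0 ≤ τ) (hu : ∀ y, ∃ x, y = x + f x * τ ∧ u y = f x) (x : ℝ) :
    HasDerivAt u (f' x / (1 + f' x * τ)) (x + f x * τ) := by
  set g : ℝ → ℝ := fun x => x + f x * τ
  have hmono : Monotone f := monotone_of_deriv_nonneg (fun x => (hf x).differentiableAt)
    fun x => (hf x).deriv ▸ hf' x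
  have hg : StrictMono g := strictMono_id.add_monotone (hmono.mul_const hτ)
  have hg' (x : ℝ) : HasDerivAt g (1 + f' x * τ) x := (hasDerivAt_id x).add ((hf x).mul_const τ)
  have hcont : Continuous f := continuous_iff_continuousAt.2 fun x => (hf x).continuousAt
  let e := hg.orderIsoOfSurjective g (surjective_add_mul_of_monotone hmono hcont hτ)
  have he (x : ℝ) : e.symm (g x) = x := hg.orderIsoOfSurjective_symm_apply_self g _ x
  have hu_eq : u = f ∘ e.symm := funext fun y => by
    obtain ⟨x, rfl, hux⟩ := hu y
    rw [hux, comp_apply, he]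
  have hinv : HasDerivAt e.symm (1 + f' x * τ)⁻¹ (g x) := by
    exact HasDerivAt.of_local_left_inverse e.symm.continuous.continuousAt ((he x).symm ▸ hg' x)
      (by nlinarith [hf' x]) (Eventually.of_forall fun y => e.apply_symm_apply y)
  rw [hu_eq, div_eq_mul_inv]
  exact (hf x).comp_of_eq (g x) hinv (he x).symm

end Characteristics

section InitialData

variable {wm wp : ℝ}

theorem hasDerivAt_w0_s3 (wm wp x : ℝ) :
    HasDerivAt (w0 wm wp) ((wp - wm) / 2 * (1 / cosh x ^ 2)) x :=
  ((hasDerivAt_tanh_s3 x).const_mul _).const_add _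

theorem w0_deriv_nonneg (h : wm ≤ wp) (x : ℝ) : 0 ≤ (wp - wm) / 2 * (1 / cosh x ^ 2) :=
  mul_nonneg (by linarith) (by positivity)

theorem w0_deriv_le (h : wm ≤ wp) (x : ℝ) :
    (wp - wm) / 2 * (1 / cosh x ^ 2) ≤ 2 * (wp - wm) * exp (-(2 * |x|)) := by
  nlinarith [one_div_cosh_sq_le x]

theorem wm_le_w0 (h : wm ≤ wp) (x : ℝ) : wm ≤ w0 wm wp x := by
  unfold w0; nlinarith [neg_one_lt_tanh x]

theorem w0_le_wp (h : wm ≤ wp) (x : ℝ) : w0 wm wp x ≤ wp := by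
  unfold w0; nlinarith [tanh_lt_one x]

theorem abs_w0_sub_wm_le (h : wm ≤ wp) {x : ℝ} (hx : x ≤ 0) :
    |w0 wm wp x - wm| ≤ (wp - wm) * exp (-(2 * |x|)) := by
  rw [abs_of_nonneg (by linarith [wm_le_w0 h x]), abs_of_nonpos hx, mul_neg, neg_neg]
  unfold w0; nlinarith [one_add_tanh_le x]

theorem abs_w0_sub_wp_le (h : wm ≤ wp) {x : ℝ} (hx : 0 ≤ x) :
    |w0 wm wp x - wp| ≤ (wp - wm) * exp (-(2 * |x|)) := by
  rw [abs_of_nonpos (by linarith [w0_le_wp h x]), abs_of_nonneg hx]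
  unfold w0; nlinarith [one_sub_tanh_le x]

end InitialData

/-- Exponential decay of the smoothed Burgers solution towards its far-field values
outside the fan region. -/
theorem burgers_exponential_decay (wm wp : ℝ) (h : wm < wp) (w : ℝ → ℝ → ℝ)
    (hw : IsSmoothedBurgers wm wp w) :
    ∀ τ ≥ (0:ℝ), ∀ y : ℝ,
      (y - wm * τ < 0 →
        |w τ y - wm| ≤ (wp - wm) * Real.exp (-(2 * |y - wm * τ|)) ∧
        |dY w τ y| ≤ 2 * (wp - wm) * Real.exp (-(2 * |y - wm * τ|))) ∧
      (0 < y - wp * τ →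
        |w τ y - wp| ≤ (wp - wm) * Real.exp (-(2 * |y - wp * τ|)) ∧
        |dY w τ y| ≤ 2 * (wp - wm) * Real.exp (-(2 * |y - wp * τ|))) := by
  intro τ hτ y
  have hle : wm ≤ wp := h.le
  obtain ⟨x, rfl, hwx⟩ := hw τ hτ y
  have hdY : |dY w τ (x + w0 wm wp x * τ)| ≤ 2 * (wp - wm) * exp (-(2 * |x|)) := by
    rw [dY, (hasDerivAt_of_characteristics (hasDerivAt_w0_s3 wm wp) (w0_deriv_nonneg hle) hτ
      (hw τ hτ) x).deriv]
    exact (abs_div_one_add_mul_le (w0_deriv_nonneg hle x) hτ).trans (w0_deriv_le hle x)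
  have hdecay {s c : ℝ} (hs : |s| ≤ |x|) (hc : 0 ≤ c) :
      c * exp (-(2 * |x|)) ≤ c * exp (-(2 * |s|)) := by gcongr
  rw [hwx]
  refine ⟨fun hs => ?_, fun hs => ?_⟩
  · have hxs : x ≤ x + w0 wm wp x * τ - wm * τ := by nlinarith [wm_le_w0 hle x]
    have habs : |x + w0 wm wp x * τ - wm * τ| ≤ |x| := by
      rw [abs_of_neg hs, abs_of_neg (hxs.trans_lt hs)]; linarith
    exact ⟨(abs_w0_sub_wm_le hle (hxs.trans hs.le)).trans (hdecay habs (by linarith)),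
      hdY.trans (hdecay habs (by linarith))⟩
  · have hxs : x + w0 wm wp x * τ - wp * τ ≤ x := by nlinarith [w0_le_wp hle x]
    have habs : |x + w0 wm wp x * τ - wp * τ| ≤ |x| := by
      rw [abs_of_pos hs, abs_of_pos (hs.trans_le hxs)]; exact hxs
    exact ⟨(abs_w0_sub_wp_le hle (hs.le.trans hxs)).trans (hdecay habs (by linarith)),
      hdY.trans (hdecay habs (by linarith))⟩
end
end

section
/- Let θ_±>0 and a>0, and let Θ̂(τ,y)=Θ̂(y/√(1+τ)) be the unique self-similar solution of the nonlinear diffusion equation Θ_τ = a(Θ_y/Θ)_y on ℝ with Θ(τ,±∞)=θ_±. Then there are positive constants C and c₀ such that for all τ≥0 and y∈ℝ: |Θ̂(τ,y)−θ_±| + (1+τ)^{1/2}|Θ̂_y(τ,y)| + (1+τ)|Θ̂_{yy}(τ,y)| ≤ C δ^{CD} e^{−c₀ y²/(1+τ)} as |y|→∞ (the ± sign taken according to the sign of y), where δ^{CD}=|θ_+−θ_-|. -/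
set_option maxHeartbeats 1600000


open MeasureTheory Filter Set
open scoped ENNReal

noncomputable section

/-- `Θ` is the self-similar solution `Θ(τ,y) = f(y/√(1+τ))` of the nonlinear diffusion
equation `Θ_τ = a (Θ_y / Θ)_y` with far-field values `θm` (at `-∞`) and `θp` (at `+∞`). -/
def IsSelfSimilarDiffusion (a θm θp : ℝ) (Θ : ℝ → ℝ → ℝ) : Prop :=
  (∃ f : ℝ → ℝ, ContDiff ℝ (⊤ : ℕ∞) f ∧ (∀ ξ, 0 < f ξ) ∧
    Tendsto f atBot (nhds θm) ∧ Tendsto f atTop (nhds θp) ∧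
    ∀ τ y, Θ τ y = f (y / Real.sqrt (1 + τ))) ∧
  ∀ τ, 0 ≤ τ → ∀ y, dT Θ τ y = a * deriv (fun z => dY Θ τ z / Θ τ z) y

lemma exists_bounds (θm θp : ℝ) (hθm : 0 < θm) (hθp : 0 < θp) (f : ℝ → ℝ)
    (hc : Continuous f) (hpos : ∀ x, 0 < f x)
    (hbot : Tendsto f atBot (nhds θm)) (htop : Tendsto f atTop (nhds θp)) :
    ∃ m M : ℝ, 0 < m ∧ ∀ x, m ≤ f x ∧ f x ≤ M := by
  obtain ⟨A, hA⟩ := (hbot.eventually (eventually_gt_nhds (half_lt_self hθm))).exists_forall_of_atBot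
  obtain ⟨B, hB⟩ := (htop.eventually (eventually_gt_nhds (half_lt_self hθp))).exists_forall_of_atTop
  obtain ⟨A2, hA2⟩ := (hbot.eventually (eventually_lt_nhds (lt_add_one θm))).exists_forall_of_atBot
  obtain ⟨B2, hB2⟩ := (htop.eventually (eventually_lt_nhds (lt_add_one θp))).exists_forall_of_atTop
  set L : ℝ := min A A2
  set R : ℝ := max (max B B2) L
  have hLR : L ≤ R := le_max_right _ _
  obtain ⟨x0, hx0, hmin⟩ := (isCompact_Icc (a := L) (b := R)).exists_isMinOn ⟨L, by simp [hLR]⟩ hc.continuousOn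
  obtain ⟨x1, hx1, hmax⟩ := (isCompact_Icc (a := L) (b := R)).exists_isMaxOn ⟨L, by simp [hLR]⟩ hc.continuousOn
  refine ⟨min (f x0) (min (θm/2) (θp/2)), max (f x1) (max (θm+1) (θp+1)), lt_min (hpos x0) (by positivity), fun x => ?_⟩
  constructor
  · rcases le_or_gt x L with h | h
    · exact le_trans (min_le_of_right_le (min_le_left _ _)) (hA x (h.trans (min_le_left _ _))).le
    rcases le_or_gt x R with h2 | h2
    · exact le_trans (min_le_left _ _) (hmin ⟨h.le, h2⟩)
    · have : B ≤ x := le_trans ((le_max_left B B2).trans (le_max_left _ L)) h2.le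
      exact le_trans (min_le_of_right_le (min_le_right _ _)) (hB x this).le
  · rcases le_or_gt x L with h | h
    · exact le_trans (hA2 x (h.trans (min_le_right _ _))).le (le_max_of_le_right (le_max_left _ _))
    rcases le_or_gt x R with h2 | h2
    · exact le_trans (hmax ⟨h.le, h2⟩) (le_max_left _ _)
    · have : B2 ≤ x := le_trans ((le_max_right B B2).trans (le_max_left _ L)) h2.le
      exact le_trans (hB2 x this).le (le_max_of_le_right (le_max_right _ _))


lemma profile_decay (a θm θp : ℝ) (ha : 0 < a) (hθm : 0 < θm) (hθp : 0 < θp)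
    (f : ℝ → ℝ) (hf : ContDiff ℝ (⊤ : ℕ∞) f) (hpos : ∀ x, 0 < f x)
    (hbot : Tendsto f atBot (nhds θm)) (htop : Tendsto f atTop (nhds θp))
    (hode : ∀ y, deriv (fun x => a * (deriv f x / f x)) y = -(y / 2) * deriv f y) :
    ∃ C > (0:ℝ), ∃ c0 > (0:ℝ), ∀ ξ : ℝ,
      (0 ≤ ξ → |f ξ - θp| + |deriv f ξ| + |deriv (deriv f) ξ| ≤
        C * |θp - θm| * Real.exp (-(c0 * ξ ^ 2))) ∧
      (ξ ≤ 0 → |f ξ - θm| + |deriv f ξ| + |deriv (deriv f) ξ| ≤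
        C * |θp - θm| * Real.exp (-(c0 * ξ ^ 2))) := by
  have hfi : ContDiff ℝ (⊤ : ℕ∞) f := hf.of_le (by simp)
  have hfd : Differentiable ℝ f := hfi.differentiable (by simp)
  have hfc : Continuous f := hfd.continuous
  have hf' : ContDiff ℝ (⊤ : ℕ∞) (deriv f) := (contDiff_infty_iff_deriv.mp hfi).2
  have hf'd : Differentiable ℝ (deriv f) := hf'.differentiable (by simp)
  have hf'c : Continuous (deriv f) := hf'd.continuous
  -- the function g = a f'/f
  set g : ℝ → ℝ := fun x => a * (deriv f x / f x) with hg_def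
  have hgd : Differentiable ℝ g :=
    (hf'd.div hfd (fun x => (hpos x).ne')).const_mul a
  have hgc : Continuous g := hgd.continuous
  have hfg : ∀ x, deriv f x = g x * f x / a := by
    intro x
    have h1 : f x ≠ 0 := (hpos x).ne'
    simp only [hg_def]
    field_simp
  have hode' : ∀ x, deriv g x = -(x / 2) * deriv f x := hode
  -- the integrating factor exponent h
  set h : ℝ → ℝ := fun x => ∫ s in (0:ℝ)..x, s * f s / (2 * a) with hh_def
  have hintc : Continuous fun s => s * f s / (2 * a) :=
    ((continuous_id.mul hfc).div_const _)
  have hh : ∀ x, HasDerivAt h (x * f x / (2 * a)) x := fun x =>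
    (hintc.integral_hasStrictDerivAt 0 x).hasDerivAt
  -- g x = g 0 * exp (- h x)
  have hgh : ∀ x, g x = g 0 * Real.exp (-h x) := by
    have hconst : ∀ x, g x * Real.exp (h x) = g 0 * Real.exp (h 0) := by
      intro x
      apply is_const_of_deriv_eq_zero
        (f := fun x => g x * Real.exp (h x))
        (hgd.mul (fun x => ((hh x).exp.differentiableAt)))
      intro x
      have hd : HasDerivAt (fun x => g x * Real.exp (h x))
          (deriv g x * Real.exp (h x) + g x * (Real.exp (h x) * (x * f x / (2*a)))) x :=
        (hgd x).hasDerivAt.mul (hh x).exp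
      rw [hd.deriv, hode' x, hfg x]
      have h1 : f x ≠ 0 := (hpos x).ne'
      field_simp
      ring
    intro x
    have h0 : h 0 = 0 := by simp [hh_def]
    have := hconst x
    rw [h0, Real.exp_zero, mul_one] at this
    rw [← this, Real.exp_neg, mul_assoc, mul_inv_cancel₀ (Real.exp_ne_zero _), mul_one]
  clear_value g
  -- bounds m ≤ f ≤ M
  obtain ⟨m, M, hm0, hmM⟩ := exists_bounds θm θp hθm hθp f hfc hpos hbot htop
  have hM0 : 0 < M := lt_of_lt_of_le hm0 (le_trans (hmM 0).1 (hmM 0).2)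
  have hint : ∀ u v : ℝ, IntervalIntegrable (fun s => s * f s / (2*a)) volume u v :=
    fun u v => hintc.intervalIntegrable u v
  have hcint : ∀ (c u v : ℝ), IntervalIntegrable (fun s => s * c / (2*a)) volume u v :=
    fun c u v => (((continuous_id.mul continuous_const).div_const _).intervalIntegrable u v)
  have hconstint : ∀ (c u v : ℝ), (∫ s in u..v, s * c / (2*a)) = (v^2 - u^2) * c / (4*a) := by
    intro c u v
    have he : (fun s => s * c / (2*a)) = fun s => s * (c / (2*a)) := by funext s; ring
    rw [he, intervalIntegral.integral_mul_const, integral_id]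
    ring
  have hhlb : ∀ x : ℝ, m * x^2/(4*a) ≤ h x := by
    intro x
    rcases le_total 0 x with hx | hx
    · have hmono := intervalIntegral.integral_mono_on (f := fun s => s * m / (2*a))
        (g := fun s => s * f s / (2*a)) hx (hcint m 0 x) (hint 0 x)
        (fun s hs => div_le_div_of_nonneg_right
          (mul_le_mul_of_nonneg_left (hmM s).1 hs.1) (by linarith))
      calc m * x^2/(4*a) = (x^2 - 0^2) * m / (4*a) := by ring
        _ ≤ h x := by rw [← hconstint m 0 x]; exact hmono
    · have hmono := intervalIntegral.integral_mono_on (f := fun s => s * f s / (2*a))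
        (g := fun s => s * m / (2*a)) hx (hint x 0) (hcint m x 0)
        (fun s hs => div_le_div_of_nonneg_right
          (mul_le_mul_of_nonpos_left (hmM s).1 hs.2) (by linarith))
      have hsym : h x = -(∫ s in x..(0:ℝ), s * f s / (2*a)) := by
        rw [hh_def]; rw [← intervalIntegral.integral_symm]
      rw [hsym, hconstint m x 0] at *
      have : (0^2 - x^2) * m / (4*a) = -(m * x^2/(4*a)) := by ring
      linarith [hmono]
  have hhub : ∀ x : ℝ, h x ≤ M * x^2/(4*a) := by
    intro x
    rcases le_total 0 x with hx | hx
    · have hmono := intervalIntegral.integral_mono_on (f := fun s => s * f s / (2*a))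
        (g := fun s => s * M / (2*a)) hx (hint 0 x) (hcint M 0 x)
        (fun s hs => div_le_div_of_nonneg_right
          (mul_le_mul_of_nonneg_left (hmM s).2 hs.1) (by linarith))
      calc h x ≤ (x^2 - 0^2) * M / (4*a) := by rw [← hconstint M 0 x]; exact hmono
        _ = M * x^2/(4*a) := by ring
    · have hmono := intervalIntegral.integral_mono_on (f := fun s => s * M / (2*a))
        (g := fun s => s * f s / (2*a)) hx (hcint M x 0) (hint x 0)
        (fun s hs => div_le_div_of_nonneg_right
          (mul_le_mul_of_nonpos_left (hmM s).2 hs.2) (by linarith))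
      have hsym : h x = -(∫ s in x..(0:ℝ), s * f s / (2*a)) := by
        rw [hh_def]; rw [← intervalIntegral.integral_symm]
      rw [hsym, hconstint M x 0] at *
      have : (0^2 - x^2) * M / (4*a) = -(M * x^2/(4*a)) := by ring
      linarith [hmono]
  -- exponential bound on g
  set c : ℝ := m / (4*a) with hc_def
  have hc0 : 0 < c := by positivity
  have hgb : ∀ x : ℝ, |g x| ≤ |g 0| * Real.exp (-(c * x^2)) := by
    intro x
    rw [hgh x, abs_mul, Real.abs_exp]
    refine mul_le_mul_of_nonneg_left (Real.exp_le_exp.mpr ?_) (abs_nonneg _)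
    have h1 := hhlb x
    have h2 : c * x^2 = m * x^2 / (4*a) := by rw [hc_def]; ring
    linarith
  -- fundamental theorem of calculus and the representation of f'
  have hhd : Differentiable ℝ h := fun x => (hh x).differentiableAt
  have hhc : Continuous h := hhd.continuous
  have hEc : Continuous fun s => Real.exp (-h s) * f s := (hhc.neg.rexp).mul hfc
  have hFTC : ∀ u v : ℝ, f v - f u = ∫ s in u..v, deriv f s := by
    intro u v
    rw [intervalIntegral.integral_deriv_eq_sub (fun x _ => hfd x) (hf'c.intervalIntegrable u v)]
  have hder_eq : ∀ u v : ℝ, (∫ s in u..v, deriv f s)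
      = (g 0 / a) * ∫ s in u..v, Real.exp (-h s) * f s := by
    intro u v
    rw [← intervalIntegral.integral_const_mul]
    apply intervalIntegral.integral_congr
    intro s _
    rw [hfg s, hgh s]; ring
  -- lower bound for the mass integral
  set c₂ : ℝ := 2 * (Real.exp (-(M/(4*a))) * m) with hc2_def
  have hc20 : 0 < c₂ := by positivity
  have hJlb : ∀ R : ℝ, 1 ≤ R → c₂ ≤ ∫ s in (-R)..R, Real.exp (-h s) * f s := by
    intro R hR
    have h1R : (-R : ℝ) ≤ -1 := by linarith
    have h1R' : (1 : ℝ) ≤ R := hR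
    have hJa : (0:ℝ) ≤ ∫ s in (-R)..(-1), Real.exp (-h s) * f s :=
      intervalIntegral.integral_nonneg h1R (fun s _ => mul_nonneg (Real.exp_pos _).le (hpos s).le)
    have hJc : (0:ℝ) ≤ ∫ s in (1:ℝ)..R, Real.exp (-h s) * f s :=
      intervalIntegral.integral_nonneg h1R' (fun s _ => mul_nonneg (Real.exp_pos _).le (hpos s).le)
    have hJb : c₂ ≤ ∫ s in (-1:ℝ)..1, Real.exp (-h s) * f s := by
      have hmono := intervalIntegral.integral_mono_on
        (f := fun _ : ℝ => Real.exp (-(M/(4*a))) * m)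
        (g := fun s => Real.exp (-h s) * f s)
        (μ := volume) (by norm_num : (-1:ℝ) ≤ 1) intervalIntegrable_const (hEc.intervalIntegrable _ _)
        (fun s hs => by
          have hs2 : s^2 ≤ 1 := by nlinarith [hs.1, hs.2]
          have hhs : h s ≤ M/(4*a) := by
            have := hhub s
            have : M * s^2/(4*a) ≤ M/(4*a) := by
              apply div_le_div_of_nonneg_right ?_ (by linarith)
              nlinarith
            linarith [hhub s]
          have he : Real.exp (-(M/(4*a))) ≤ Real.exp (-h s) :=
            Real.exp_le_exp.mpr (by linarith)
          exact mul_le_mul he (hmM s).1 hm0.le (Real.exp_pos _).le)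
      rw [intervalIntegral.integral_const] at hmono
      have : ((1:ℝ) - (-1)) • (Real.exp (-(M/(4*a))) * m) = c₂ := by
        rw [hc2_def]; ring_nf
      linarith [hmono, this.symm.le]
    have hsplit1 : (∫ s in (-R)..(-1), Real.exp (-h s) * f s)
        + (∫ s in (-1:ℝ)..1, Real.exp (-h s) * f s)
        = ∫ s in (-R)..(1:ℝ), Real.exp (-h s) * f s :=
      intervalIntegral.integral_add_adjacent_intervals
        (hEc.intervalIntegrable _ _) (hEc.intervalIntegrable _ _)
    have hsplit2 : (∫ s in (-R)..(1:ℝ), Real.exp (-h s) * f s)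
        + (∫ s in (1:ℝ)..R, Real.exp (-h s) * f s)
        = ∫ s in (-R)..R, Real.exp (-h s) * f s :=
      intervalIntegral.integral_add_adjacent_intervals
        (hEc.intervalIntegrable _ _) (hEc.intervalIntegrable _ _)
    linarith
  -- bound |g 0| by the wave strength
  set δ : ℝ := |θp - θm| with hδ_def
  have hδ0 : 0 ≤ δ := abs_nonneg _
  have hg0 : |g 0| * c₂ / a ≤ δ := by
    have t1 : Tendsto (fun R => |f R - f (-R)|) atTop (nhds |θp - θm|) :=
      ((htop.sub (hbot.comp tendsto_neg_atTop_atBot)).abs)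
    apply ge_of_tendsto t1
    filter_upwards [eventually_ge_atTop (1:ℝ)] with R hR
    have heq : f R - f (-R) = (g 0 / a) * ∫ s in (-R)..R, Real.exp (-h s) * f s := by
      rw [hFTC (-R) R, hder_eq]
    have hJ0 : (0:ℝ) ≤ ∫ s in (-R)..R, Real.exp (-h s) * f s := hc20.le.trans (hJlb R hR)
    calc |g 0| * c₂ / a = |g 0| / a * c₂ := by ring
      _ ≤ |g 0| / a * ∫ s in (-R)..R, Real.exp (-h s) * f s :=
          mul_le_mul_of_nonneg_left (hJlb R hR) (by positivity)
      _ = |g 0 / a| * |∫ s in (-R)..R, Real.exp (-h s) * f s| := by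
          rw [abs_div (g 0) a, abs_of_pos ha, abs_of_nonneg hJ0]
      _ = |g 0 / a * ∫ s in (-R)..R, Real.exp (-h s) * f s| := (abs_mul _ _).symm
      _ = |f R - f (-R)| := by rw [heq]
  have hG : |g 0| ≤ δ * a / c₂ := by
    rw [le_div_iff₀ hc20]
    rw [div_le_iff₀ ha] at hg0
    linarith
  -- derivative bound
  have hf'b : ∀ x : ℝ, |deriv f x| ≤ M / a * |g 0| * Real.exp (-(c * x^2)) := by
    intro x
    rw [hfg x, abs_div, abs_of_pos ha, abs_mul, abs_of_pos (hpos x)]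
    calc |g x| * f x / a ≤ (|g 0| * Real.exp (-(c * x^2))) * M / a := by
          apply div_le_div_of_nonneg_right ?_ ha.le
          exact mul_le_mul (hgb x) (hmM x).2 (hpos x).le
            (mul_nonneg (abs_nonneg _) (Real.exp_pos _).le)
      _ = M / a * |g 0| * Real.exp (-(c * x^2)) := by ring
  set I : ℝ := ∫ s : ℝ, Real.exp (-(c/2 * s^2)) with hI_def
  have hI0 : (0:ℝ) ≤ I := integral_nonneg fun s => (Real.exp_pos _).le
  have hIint : Integrable (fun s : ℝ => Real.exp (-(c/2 * s^2))) :=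
    by simpa [neg_mul] using integrable_exp_neg_mul_sq (half_pos hc0)
  have hIb : ∀ u v : ℝ, u ≤ v → (∫ s in u..v, Real.exp (-(c/2 * s^2))) ≤ I := by
    intro u v huv
    rw [intervalIntegral.integral_of_le huv, hI_def]
    exact setIntegral_le_integral hIint (ae_of_all _ fun s => (Real.exp_pos _).le)
  have hsplitexp : ∀ x y : ℝ, y^2 ≤ x^2 →
      Real.exp (-(c * x^2)) ≤ Real.exp (-(c/2 * y^2)) * Real.exp (-(c/2 * x^2)) := by
    intro x y hxy
    rw [← Real.exp_add]
    apply Real.exp_le_exp.mpr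
    nlinarith [hc0]
  -- tail estimate at +∞
  have htailp : ∀ y : ℝ, 0 ≤ y →
      |θp - f y| ≤ M / a * |g 0| * I * Real.exp (-(c/2 * y^2)) := by
    intro y hy
    have t1 : Tendsto (fun R => |f R - f y|) atTop (nhds |θp - f y|) :=
      ((htop.sub tendsto_const_nhds).abs)
    apply le_of_tendsto t1
    filter_upwards [eventually_ge_atTop y] with R hR
    rw [hFTC y R]
    have hcont2 : Continuous fun s : ℝ =>
        M / a * |g 0| * Real.exp (-(c/2 * y^2)) * Real.exp (-(c/2 * s^2)) := by
      exact continuous_const.mul ((continuous_const.mul (continuous_pow 2)).neg.rexp)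
    calc |∫ s in y..R, deriv f s| ≤ ∫ s in y..R, |deriv f s| :=
          intervalIntegral.abs_integral_le_integral_abs hR
      _ ≤ ∫ s in y..R, M / a * |g 0| * Real.exp (-(c/2 * y^2)) * Real.exp (-(c/2 * s^2)) := by
          apply intervalIntegral.integral_mono_on hR
            (hf'c.abs.intervalIntegrable _ _) (hcont2.intervalIntegrable _ _)
          intro s hs
          calc |deriv f s| ≤ M / a * |g 0| * Real.exp (-(c * s^2)) := hf'b s
            _ ≤ M / a * |g 0| * (Real.exp (-(c/2 * y^2)) * Real.exp (-(c/2 * s^2))) := by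
                apply mul_le_mul_of_nonneg_left
                  (hsplitexp s y (by nlinarith [hs.1, hy])) (by positivity)
            _ = M / a * |g 0| * Real.exp (-(c/2 * y^2)) * Real.exp (-(c/2 * s^2)) := by ring
      _ = M / a * |g 0| * Real.exp (-(c/2 * y^2)) * ∫ s in y..R, Real.exp (-(c/2 * s^2)) :=
          intervalIntegral.integral_const_mul _ _
      _ ≤ M / a * |g 0| * Real.exp (-(c/2 * y^2)) * I :=
          mul_le_mul_of_nonneg_left (hIb y R hR) (by positivity)
      _ = M / a * |g 0| * I * Real.exp (-(c/2 * y^2)) := by ring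
  -- tail estimate at -∞
  have htailm : ∀ y : ℝ, y ≤ 0 →
      |f y - θm| ≤ M / a * |g 0| * I * Real.exp (-(c/2 * y^2)) := by
    intro y hy
    have t1 : Tendsto (fun R => |f y - f (-R)|) atTop (nhds |f y - θm|) :=
      ((tendsto_const_nhds.sub (hbot.comp tendsto_neg_atTop_atBot)).abs)
    apply le_of_tendsto t1
    filter_upwards [eventually_ge_atTop (-y)] with R hR
    have hRy : -R ≤ y := by linarith
    have heq2 : f y - f (-R) = ∫ s in (-R)..y, deriv f s := hFTC (-R) y
    rw [heq2]
    have hcont2 : Continuous fun s : ℝ =>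
        M / a * |g 0| * Real.exp (-(c/2 * y^2)) * Real.exp (-(c/2 * s^2)) := by
      exact continuous_const.mul ((continuous_const.mul (continuous_pow 2)).neg.rexp)
    calc |∫ s in (-R)..y, deriv f s| ≤ ∫ s in (-R)..y, |deriv f s| :=
          intervalIntegral.abs_integral_le_integral_abs hRy
      _ ≤ ∫ s in (-R)..y, M / a * |g 0| * Real.exp (-(c/2 * y^2)) * Real.exp (-(c/2 * s^2)) := by
          apply intervalIntegral.integral_mono_on hRy
            (hf'c.abs.intervalIntegrable _ _) (hcont2.intervalIntegrable _ _)
          intro s hs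
          calc |deriv f s| ≤ M / a * |g 0| * Real.exp (-(c * s^2)) := hf'b s
            _ ≤ M / a * |g 0| * (Real.exp (-(c/2 * y^2)) * Real.exp (-(c/2 * s^2))) := by
                apply mul_le_mul_of_nonneg_left
                  (hsplitexp s y (by nlinarith [hs.2, hy])) (by positivity)
            _ = M / a * |g 0| * Real.exp (-(c/2 * y^2)) * Real.exp (-(c/2 * s^2)) := by ring
      _ = M / a * |g 0| * Real.exp (-(c/2 * y^2)) * ∫ s in (-R)..y, Real.exp (-(c/2 * s^2)) :=
          intervalIntegral.integral_const_mul _ _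
      _ ≤ M / a * |g 0| * Real.exp (-(c/2 * y^2)) * I :=
          mul_le_mul_of_nonneg_left (hIb (-R) y hRy) (by positivity)
      _ = M / a * |g 0| * I * Real.exp (-(c/2 * y^2)) := by ring
  -- second derivative formula
  have hf''eq : ∀ x : ℝ, deriv (deriv f) x
      = (-(x / 2) * deriv f x * f x + g x * deriv f x) / a := by
    intro x
    have heq : deriv f = fun x => g x * f x / a := funext hfg
    have hd : HasDerivAt (fun x => g x * f x / a)
        ((deriv g x * f x + g x * deriv f x) / a) x :=
      (((hgd x).hasDerivAt.mul (hfd x).hasDerivAt)).div_const a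
    conv_lhs => rw [heq]
    rw [hd.deriv, hode' x]
  -- |x| e^{-c x²} ≤ (1+2/c) e^{-c x²/2}
  have habsx : ∀ x : ℝ, |x| * Real.exp (-(c * x^2)) ≤ (1 + 2/c) * Real.exp (-(c/2 * x^2)) := by
    intro x
    have e1 := Real.add_one_le_exp (c/2 * x^2)
    have e2 : (1:ℝ) ≤ Real.exp (c/2 * x^2) := Real.one_le_exp (by positivity)
    have e3 : |x| ≤ 1 + x^2 := by nlinarith [sq_abs x, sq_nonneg (|x| - 1), abs_nonneg x]
    have e4 : x^2 ≤ 2/c * Real.exp (c/2 * x^2) := by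
      rw [div_mul_eq_mul_div, le_div_iff₀ hc0]
      nlinarith
    have h1 : |x| ≤ (1 + 2/c) * Real.exp (c/2 * x^2) := by
      calc |x| ≤ 1 + x^2 := e3
        _ ≤ Real.exp (c/2 * x^2) + 2/c * Real.exp (c/2 * x^2) := by linarith
        _ = (1 + 2/c) * Real.exp (c/2 * x^2) := by ring
    calc |x| * Real.exp (-(c * x^2))
        ≤ ((1 + 2/c) * Real.exp (c/2 * x^2)) * Real.exp (-(c * x^2)) :=
          mul_le_mul_of_nonneg_right h1 (Real.exp_pos _).le
      _ = (1 + 2/c) * Real.exp (c/2 * x^2 + -(c * x^2)) := by rw [mul_assoc, ← Real.exp_add]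
      _ = (1 + 2/c) * Real.exp (-(c/2 * x^2)) := by ring_nf
  have hGa : |g 0| ≤ (θp + θm) * a / c₂ := by
    have hδd : δ ≤ θp + θm := by
      rw [hδ_def]
      exact abs_le.mpr ⟨by linarith, by linarith⟩
    calc |g 0| ≤ δ * a / c₂ := hG
      _ ≤ (θp + θm) * a / c₂ := by
        apply div_le_div_of_nonneg_right ?_ hc20.le
        exact mul_le_mul_of_nonneg_right hδd ha.le
  set CC : ℝ := (M / (a*a)) * ((M/2) * (1 + 2/c) + (θp + θm) * a / c₂) with hCC_def
  have hCC0 : 0 < CC := by positivity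
  have hf''b : ∀ x : ℝ, |deriv (deriv f) x| ≤ CC * |g 0| * Real.exp (-(c/2 * x^2)) := by
    intro x
    rw [hf''eq x, abs_div, abs_of_pos ha]
    have hexp2 : Real.exp (-(c * x^2)) ≤ Real.exp (-(c/2 * x^2)) :=
      Real.exp_le_exp.mpr (by nlinarith [sq_nonneg x])
    have t1 : |(-(x / 2)) * deriv f x * f x|
        ≤ M/2 * (1 + 2/c) * (M / a * |g 0|) * Real.exp (-(c/2 * x^2)) := by
      rw [abs_mul, abs_mul, abs_neg, abs_div, abs_two, abs_of_pos (hpos x)]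
      calc |x| / 2 * |deriv f x| * f x
          ≤ |x| / 2 * (M / a * |g 0| * Real.exp (-(c * x^2))) * M := by
            apply mul_le_mul ?_ (hmM x).2 (hpos x).le (by positivity)
            exact mul_le_mul_of_nonneg_left (hf'b x) (by positivity)
        _ = M/2 * (M / a * |g 0|) * (|x| * Real.exp (-(c * x^2))) := by ring
        _ ≤ M/2 * (M / a * |g 0|) * ((1 + 2/c) * Real.exp (-(c/2 * x^2))) :=
            mul_le_mul_of_nonneg_left (habsx x) (by positivity)
        _ = M/2 * (1 + 2/c) * (M / a * |g 0|) * Real.exp (-(c/2 * x^2)) := by ring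
    have t2 : |g x * deriv f x|
        ≤ (θp + θm) * a / c₂ * (M / a * |g 0|) * Real.exp (-(c/2 * x^2)) := by
      rw [abs_mul]
      have hgx : |g x| ≤ (θp + θm) * a / c₂ := by
        calc |g x| ≤ |g 0| * Real.exp (-(c * x^2)) := hgb x
          _ ≤ |g 0| * 1 := by
              apply mul_le_mul_of_nonneg_left ?_ (abs_nonneg _)
              rw [Real.exp_le_one_iff]
              nlinarith [sq_nonneg x]
          _ = |g 0| := mul_one _
          _ ≤ (θp + θm) * a / c₂ := hGa
      calc |g x| * |deriv f x|
          ≤ (θp + θm) * a / c₂ * (M / a * |g 0| * Real.exp (-(c * x^2))) :=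
            mul_le_mul hgx (hf'b x) (abs_nonneg _) (by positivity)
        _ ≤ (θp + θm) * a / c₂ * (M / a * |g 0| * Real.exp (-(c/2 * x^2))) := by
            apply mul_le_mul_of_nonneg_left ?_ (by positivity)
            exact mul_le_mul_of_nonneg_left hexp2 (by positivity)
        _ = (θp + θm) * a / c₂ * (M / a * |g 0|) * Real.exp (-(c/2 * x^2)) := by ring
    have habs3 : |(-(x / 2)) * deriv f x * f x + g x * deriv f x|
        ≤ |(-(x / 2)) * deriv f x * f x| + |g x * deriv f x| := abs_add_le _ _
    have hsum := le_trans habs3 (add_le_add t1 t2)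
    calc |(-(x / 2)) * deriv f x * f x + g x * deriv f x| / a
        ≤ (M/2 * (1 + 2/c) * (M / a * |g 0|) * Real.exp (-(c/2 * x^2))
          + (θp + θm) * a / c₂ * (M / a * |g 0|) * Real.exp (-(c/2 * x^2))) / a :=
          div_le_div_of_nonneg_right hsum ha.le
      _ = CC * |g 0| * Real.exp (-(c/2 * x^2)) := by
          rw [hCC_def]; field_simp
  -- final assembly
  refine ⟨M / c₂ * I + M / c₂ + CC * a / c₂ + 1, by positivity, c/2, half_pos hc0, fun ξ => ?_⟩
  have hGδ : |g 0| ≤ δ * a / c₂ := hG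
  have key1 : M / a * |g 0| * I * Real.exp (-(c/2 * ξ^2))
      ≤ M / c₂ * I * δ * Real.exp (-(c/2 * ξ^2)) := by
    apply mul_le_mul_of_nonneg_right ?_ (Real.exp_pos _).le
    calc M / a * |g 0| * I ≤ M / a * (δ * a / c₂) * I := by
          apply mul_le_mul_of_nonneg_right ?_ hI0
          exact mul_le_mul_of_nonneg_left hGδ (by positivity)
      _ = M / c₂ * I * δ := by field_simp
  have key2 : M / a * |g 0| * Real.exp (-(c * ξ^2))
      ≤ M / c₂ * δ * Real.exp (-(c/2 * ξ^2)) := by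
    have hexp2 : Real.exp (-(c * ξ^2)) ≤ Real.exp (-(c/2 * ξ^2)) :=
      Real.exp_le_exp.mpr (by nlinarith [sq_nonneg ξ])
    calc M / a * |g 0| * Real.exp (-(c * ξ^2))
        ≤ M / a * (δ * a / c₂) * Real.exp (-(c/2 * ξ^2)) :=
          mul_le_mul (mul_le_mul_of_nonneg_left hGδ (by positivity)) hexp2
            (Real.exp_pos _).le (by positivity)
      _ = M / c₂ * δ * Real.exp (-(c/2 * ξ^2)) := by field_simp
  have key3 : CC * |g 0| * Real.exp (-(c/2 * ξ^2))
      ≤ CC * a / c₂ * δ * Real.exp (-(c/2 * ξ^2)) := by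
    apply mul_le_mul_of_nonneg_right ?_ (Real.exp_pos _).le
    calc CC * |g 0| ≤ CC * (δ * a / c₂) := mul_le_mul_of_nonneg_left hGδ hCC0.le
      _ = CC * a / c₂ * δ := by ring
  have hE0 : (0:ℝ) ≤ δ * Real.exp (-(c/2 * ξ^2)) := by positivity
  constructor
  · intro hξ
    have ht := htailp ξ hξ
    rw [abs_sub_comm] at ht
    have h1 := hf'b ξ
    have h2 := hf''b ξ
    have goal_eq : (M / c₂ * I + M / c₂ + CC * a / c₂ + 1) * δ * Real.exp (-(c/2 * ξ^2))
        = M / c₂ * I * δ * Real.exp (-(c/2 * ξ^2)) + M / c₂ * δ * Real.exp (-(c/2 * ξ^2))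
          + CC * a / c₂ * δ * Real.exp (-(c/2 * ξ^2)) + δ * Real.exp (-(c/2 * ξ^2)) := by ring
    rw [hδ_def] at goal_eq ⊢
    rw [hδ_def] at hE0
    calc |f ξ - θp| + |deriv f ξ| + |deriv (deriv f) ξ|
        ≤ (M / a * |g 0| * I * Real.exp (-(c/2 * ξ^2)))
          + (M / a * |g 0| * Real.exp (-(c * ξ^2)))
          + (CC * |g 0| * Real.exp (-(c/2 * ξ^2))) := by
            exact add_le_add (add_le_add ht h1) h2
      _ ≤ M / c₂ * I * |θp - θm| * Real.exp (-(c/2 * ξ^2))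
          + M / c₂ * |θp - θm| * Real.exp (-(c/2 * ξ^2))
          + CC * a / c₂ * |θp - θm| * Real.exp (-(c/2 * ξ^2)) := by
            rw [hδ_def] at key1 key2 key3
            exact add_le_add (add_le_add key1 key2) key3
      _ ≤ (M / c₂ * I + M / c₂ + CC * a / c₂ + 1) * |θp - θm| * Real.exp (-(c/2 * ξ^2)) := by
            rw [goal_eq]; linarith
  · intro hξ
    have ht := htailm ξ hξ
    have h1 := hf'b ξ
    have h2 := hf''b ξ
    have goal_eq : (M / c₂ * I + M / c₂ + CC * a / c₂ + 1) * δ * Real.exp (-(c/2 * ξ^2))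
        = M / c₂ * I * δ * Real.exp (-(c/2 * ξ^2)) + M / c₂ * δ * Real.exp (-(c/2 * ξ^2))
          + CC * a / c₂ * δ * Real.exp (-(c/2 * ξ^2)) + δ * Real.exp (-(c/2 * ξ^2)) := by ring
    rw [hδ_def] at goal_eq ⊢
    rw [hδ_def] at hE0
    calc |f ξ - θm| + |deriv f ξ| + |deriv (deriv f) ξ|
        ≤ (M / a * |g 0| * I * Real.exp (-(c/2 * ξ^2)))
          + (M / a * |g 0| * Real.exp (-(c * ξ^2)))
          + (CC * |g 0| * Real.exp (-(c/2 * ξ^2))) := by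
            exact add_le_add (add_le_add ht h1) h2
      _ ≤ M / c₂ * I * |θp - θm| * Real.exp (-(c/2 * ξ^2))
          + M / c₂ * |θp - θm| * Real.exp (-(c/2 * ξ^2))
          + CC * a / c₂ * |θp - θm| * Real.exp (-(c/2 * ξ^2)) := by
            rw [hδ_def] at key1 key2 key3
            exact add_le_add (add_le_add key1 key2) key3
      _ ≤ (M / c₂ * I + M / c₂ + CC * a / c₂ + 1) * |θp - θm| * Real.exp (-(c/2 * ξ^2)) := by
            rw [goal_eq]; linarith

/-- Gaussian decay estimates for the self-similar solution of the nonlinear diffusion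
equation `Θ_τ = a (Θ_y/Θ)_y` with far fields `θm`, `θp`; `δ^{CD} = |θ₊ - θ₋|`. -/
theorem diffusion_wave_decay (a θm θp : ℝ) (ha : 0 < a) (hθm : 0 < θm) (hθp : 0 < θp)
    (Θ : ℝ → ℝ → ℝ) (hΘ : IsSelfSimilarDiffusion a θm θp Θ) :
    ∃ C > (0:ℝ), ∃ c0 > (0:ℝ), ∀ τ ≥ (0:ℝ), ∀ y : ℝ,
      (0 ≤ y →
        |Θ τ y - θp| + Real.sqrt (1 + τ) * |dY Θ τ y| + (1 + τ) * |dYY Θ τ y| ≤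
          C * |θp - θm| * Real.exp (-(c0 * y ^ 2) / (1 + τ))) ∧
      (y ≤ 0 →
        |Θ τ y - θm| + Real.sqrt (1 + τ) * |dY Θ τ y| + (1 + τ) * |dYY Θ τ y| ≤
          C * |θp - θm| * Real.exp (-(c0 * y ^ 2) / (1 + τ))) := by
  obtain ⟨⟨f, hf, hpos, hbot, htop, hrep⟩, hPDE⟩ := hΘ
  have hfi : ContDiff ℝ (⊤ : ℕ∞) f := hf.of_le (by simp)
  have hfd : Differentiable ℝ f := hfi.differentiable (by simp)
  have hf' : ContDiff ℝ (⊤ : ℕ∞) (deriv f) := (contDiff_infty_iff_deriv.mp hfi).2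
  have hf'd : Differentiable ℝ (deriv f) := hf'.differentiable (by simp)
  -- space derivative at general time
  have hdY : ∀ τ : ℝ, 0 ≤ τ → ∀ y : ℝ,
      dY Θ τ y = deriv f (y / Real.sqrt (1 + τ)) * (Real.sqrt (1 + τ))⁻¹ := by
    intro τ hτ y
    have hfun : (fun z => Θ τ z) = fun z => f (z * (Real.sqrt (1 + τ))⁻¹) := by
      funext z; rw [hrep τ z, div_eq_mul_inv]
    have hlin : HasDerivAt (fun z : ℝ => z * (Real.sqrt (1 + τ))⁻¹)
        ((Real.sqrt (1 + τ))⁻¹) y := by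
      simpa using (hasDerivAt_id y).mul_const (Real.sqrt (1 + τ))⁻¹
    have hcomp : HasDerivAt (fun z : ℝ => f (z * (Real.sqrt (1 + τ))⁻¹))
        (deriv f (y * (Real.sqrt (1 + τ))⁻¹) * (Real.sqrt (1 + τ))⁻¹) y :=
      (hfd _).hasDerivAt.comp y hlin
    rw [dY, hfun, hcomp.deriv, div_eq_mul_inv]
  have hdYY : ∀ τ : ℝ, 0 ≤ τ → ∀ y : ℝ,
      dYY Θ τ y = deriv (deriv f) (y / Real.sqrt (1 + τ))
        * (Real.sqrt (1 + τ))⁻¹ * (Real.sqrt (1 + τ))⁻¹ := by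
    intro τ hτ y
    have hfun : (fun z => dY Θ τ z)
        = fun z => deriv f (z * (Real.sqrt (1 + τ))⁻¹) * (Real.sqrt (1 + τ))⁻¹ := by
      funext z; rw [hdY τ hτ z, div_eq_mul_inv]
    have hlin : HasDerivAt (fun z : ℝ => z * (Real.sqrt (1 + τ))⁻¹)
        ((Real.sqrt (1 + τ))⁻¹) y := by
      simpa using (hasDerivAt_id y).mul_const (Real.sqrt (1 + τ))⁻¹
    have hcomp : HasDerivAt (fun z : ℝ => deriv f (z * (Real.sqrt (1 + τ))⁻¹))
        (deriv (deriv f) (y * (Real.sqrt (1 + τ))⁻¹) * (Real.sqrt (1 + τ))⁻¹) y :=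
      (hf'd _).hasDerivAt.comp y hlin
    rw [dYY, hfun, (hcomp.mul_const (Real.sqrt (1 + τ))⁻¹).deriv, div_eq_mul_inv]
  -- time derivative at τ = 0
  have hsq1 : Real.sqrt (1 + (0:ℝ)) = 1 := by norm_num
  have hdT0 : ∀ y : ℝ, dT Θ 0 y = -(y / 2) * deriv f y := by
    intro y
    have hfun : (fun s => Θ s y) = fun s => f (y * (Real.sqrt (1 + s))⁻¹) := by
      funext s; rw [hrep s y, div_eq_mul_inv]
    have hsqrt : HasDerivAt (fun s : ℝ => Real.sqrt (1 + s)) (1 / (2 * Real.sqrt (1 + 0)) * 1) 0 :=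
      (Real.hasDerivAt_sqrt (by norm_num : (1:ℝ) + 0 ≠ 0)).comp 0
        ((hasDerivAt_id (0:ℝ)).const_add 1)
    have hne : Real.sqrt (1 + (0:ℝ)) ≠ 0 := by rw [hsq1]; norm_num
    have hinv : HasDerivAt (fun s : ℝ => (Real.sqrt (1 + s))⁻¹)
        (-(1 / (2 * Real.sqrt (1 + 0)) * 1) / (Real.sqrt (1 + 0)) ^ 2) 0 := hsqrt.inv hne
    have hmul : HasDerivAt (fun s : ℝ => y * (Real.sqrt (1 + s))⁻¹)
        (y * (-(1 / (2 * Real.sqrt (1 + 0)) * 1) / (Real.sqrt (1 + 0)) ^ 2)) 0 :=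
      hinv.const_mul y
    have hcomp : HasDerivAt (fun s : ℝ => f (y * (Real.sqrt (1 + s))⁻¹))
        (deriv f (y * (Real.sqrt (1 + 0))⁻¹)
          * (y * (-(1 / (2 * Real.sqrt (1 + 0)) * 1) / (Real.sqrt (1 + 0)) ^ 2))) 0 :=
      (hfd _).hasDerivAt.comp 0 hmul
    rw [dT, hfun, hcomp.deriv, hsq1]
    norm_num
    ring
  -- the profile ODE
  have hode : ∀ y, deriv (fun x => a * (deriv f x / f x)) y = -(y / 2) * deriv f y := by
    intro y
    have hq : (fun z => dY Θ 0 z / Θ 0 z) = fun z => deriv f z / f z := by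
      funext z
      rw [hdY 0 le_rfl z, hrep 0 z, hsq1]
      simp
    have hqd : DifferentiableAt ℝ (fun x => deriv f x / f x) y :=
      (hf'd y).div (hfd y) (hpos y).ne'
    have := hPDE 0 le_rfl y
    rw [hq] at this
    rw [deriv_const_mul a hqd, ← this, hdT0 y]
  obtain ⟨C, hC, c0, hc00, hprof⟩ :=
    profile_decay a θm θp ha hθm hθp f hf hpos hbot htop hode
  refine ⟨C, hC, c0, hc00, fun τ hτ y => ?_⟩
  have h1τ : (0:ℝ) < 1 + τ := by linarith
  have hσ0 : 0 < Real.sqrt (1 + τ) := Real.sqrt_pos.mpr h1τ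
  have hσsq : Real.sqrt (1 + τ) ^ 2 = 1 + τ := Real.sq_sqrt h1τ.le
  have hexp : Real.exp (-(c0 * y ^ 2) / (1 + τ))
      = Real.exp (-(c0 * (y / Real.sqrt (1 + τ)) ^ 2)) := by
    congr 1
    rw [div_pow, hσsq]
    field_simp
  have hΘeq : Θ τ y = f (y / Real.sqrt (1 + τ)) := hrep τ y
  have hterm2 : Real.sqrt (1 + τ) * |dY Θ τ y| = |deriv f (y / Real.sqrt (1 + τ))| := by
    rw [hdY τ hτ y, abs_mul, abs_inv, abs_of_pos hσ0]
    field_simp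
  have hterm3 : (1 + τ) * |dYY Θ τ y| = |deriv (deriv f) (y / Real.sqrt (1 + τ))| := by
    rw [hdYY τ hτ y, abs_mul, abs_mul, abs_inv, abs_of_pos hσ0, ← hσsq]
    field_simp
    rw [Real.sqrt_sq hσ0.le]
  constructor
  · intro hy
    have hξ0 : 0 ≤ y / Real.sqrt (1 + τ) := div_nonneg hy hσ0.le
    have hres := (hprof (y / Real.sqrt (1 + τ))).1 hξ0
    rw [hΘeq, hterm2, hterm3, hexp]
    exact hres
  · intro hy
    have hξ0 : y / Real.sqrt (1 + τ) ≤ 0 := div_nonpos_of_nonpos_of_nonneg hy hσ0.le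
    have hres := (hprof (y / Real.sqrt (1 + τ))).2 hξ0
    rw [hΘeq, hterm2, hterm3, hexp]
    exact hres
end
end
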